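/- Let T, A ∈ ℕ, q_1,...,q_A ∈ (0,1], δ ∈ (0,1), and set T̲_a := 1 + 24 ln(T)/q_a and A_cen := Σ_a 1/q_a. For each arm a, suppose at most T draws of i.i.d. Bernoulli(q_a) indicators occur. Then the probability that there exist an arm a and a number of pulls κ_a with T̲_a ≤ κ_a ≤ T such that Σ_{ℓ=1}^{κ_a} 1[C_{a,ℓ}=1] ≤ (1−δ) q_a κ_a is at most (2/δ²) · T^{1−12δ²} · A_cen. -/

import Mathlib

/-!
Multiplicative Chernoff bound: for a sum `S` of `κ` independent Bernoulli(`q`) indicators,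
`P[S ≤ (1 - δ) q κ] ≤ exp(δ (1 - δ) q κ) · E[exp(-δ S)] ≤ exp(-δ² q κ / 2)`, using
`q e^{-δ} + 1 - q ≤ exp(-q (δ - δ²/2))`. Once `κ ≥ 1 + 24 ln T / q_a` this is at most `T^{-12δ²}`,
and a union bound over the `A` arms and the at most `T` admissible pull counts gives
`A T^{1 - 12δ²}`, which is dominated by `(2/δ²) T^{1-12δ²} Σ_a 1/q_a` since `q_a ≤ 1` and `δ < 1`.
-/

open MeasureTheory Real ProbabilityTheory Finset
open scoped ENNReal

noncomputable def bernoulliLaw (p : ℝ) : Measure ℝ :=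
  ENNReal.ofReal p • Measure.dirac 1 + ENNReal.ofReal (1 - p) • Measure.dirac 0

lemma integrable_bernoulliLaw (p : ℝ) (f : ℝ → ℝ) : Integrable f (bernoulliLaw p) :=
  ((integrable_dirac (by simp)).smul_measure ENNReal.ofReal_ne_top).add_measure
    ((integrable_dirac (by simp)).smul_measure ENNReal.ofReal_ne_top)

lemma mgf_id_bernoulliLaw {p : ℝ} (hp : p ∈ Set.Icc 0 1) (t : ℝ) :
    mgf id (bernoulliLaw p) t = p * exp t + (1 - p) := by
  rw [bernoulliLaw, mgf_add_measure ((integrable_bernoulliLaw p _).left_of_add_measure)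
      ((integrable_bernoulliLaw p _).right_of_add_measure), mgf_smul_measure, mgf_smul_measure,
    mgf_dirac', mgf_dirac', ENNReal.toReal_ofReal hp.1, ENNReal.toReal_ofReal (sub_nonneg.2 hp.2)]
  simp

section BernoulliVariable

variable {Ω : Type*} [MeasurableSpace Ω] {μ : Measure Ω} {X : Ω → ℝ} {p : ℝ}

lemma mgf_of_map_eq_bernoulliLaw (hX : Measurable X) (hlaw : μ.map X = bernoulliLaw p)
    (hp : p ∈ Set.Icc 0 1) (t : ℝ) : mgf X μ t = p * exp t + (1 - p) := by
  rw [← mgf_id_map hX.aemeasurable, hlaw, mgf_id_bernoulliLaw hp]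

lemma integrable_exp_mul_of_map_eq_bernoulliLaw (hX : Measurable X)
    (hlaw : μ.map X = bernoulliLaw p) (t : ℝ) : Integrable (fun ω ↦ exp (t * X ω)) μ := by
  have h := integrable_bernoulliLaw p (fun x ↦ exp (t * x))
  rw [← hlaw] at h
  exact h.comp_measurable hX

end BernoulliVariable

lemma exp_neg_le_one_sub_add_sq_div_two {x : ℝ} (hx : 0 ≤ x) :
    exp (-x) ≤ 1 - x + x ^ 2 / 2 := by
  have hmono : Monotone (fun y : ℝ ↦ 1 - y + y ^ 2 / 2 - exp (-y)) := by
    refine monotone_of_deriv_nonneg (by fun_prop) fun y ↦ ?_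
    have hderiv : HasDerivAt (fun y : ℝ ↦ 1 - y + y ^ 2 / 2 - exp (-y))
        (-1 + y + exp (-y)) y :=
      ((((hasDerivAt_id' y).const_sub 1).fun_add ((hasDerivAt_pow 2 y).div_const 2)).fun_sub
        (hasDerivAt_neg' y).exp).congr_deriv (by norm_num)
    rw [hderiv.deriv]
    linarith [add_one_le_exp (-y)]
  simpa using hmono hx

lemma mul_exp_neg_add_one_sub_le {p δ : ℝ} (hp : 0 ≤ p) (hδ : 0 ≤ δ) :
    p * exp (-δ) + (1 - p) ≤ exp (-(p * (δ - δ ^ 2 / 2))) := by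
  have hexp := exp_neg_le_one_sub_add_sq_div_two hδ
  nlinarith [add_one_le_exp (-(p * (δ - δ ^ 2 / 2)))]

theorem measure_sum_le_le_of_map_eq_bernoulliLaw {Ω ι : Type*} [MeasurableSpace Ω]
    {μ : Measure Ω} [IsFiniteMeasure μ] {X : ι → Ω → ℝ} (hmeas : ∀ i, Measurable (X i))
    (hindep : iIndepFun X μ) {p : ℝ} (hp : p ∈ Set.Icc 0 1)
    (hlaw : ∀ i, μ.map (X i) = bernoulliLaw p) {δ : ℝ} (hδ : 0 ≤ δ) (s : Finset ι) :
    μ {ω | ∑ i ∈ s, X i ω ≤ (1 - δ) * p * #s} ≤ ENNReal.ofReal (exp (-(δ ^ 2 * p * #s / 2))) := by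
  have hint := hindep.integrable_exp_mul_sum hmeas
    (fun i _ ↦ integrable_exp_mul_of_map_eq_bernoulliLaw (hmeas i) (hlaw i) (-δ)) (s := s)
  have hchernoff := measure_le_le_exp_mul_mgf ((1 - δ) * p * #s) (neg_nonpos.2 hδ) hint
  rw [hindep.mgf_sum hmeas, prod_congr rfl fun i _ ↦
    mgf_of_map_eq_bernoulliLaw (hmeas i) (hlaw i) hp (-δ), prod_const] at hchernoff
  simp only [Finset.sum_apply] at hchernoff
  rw [← ofReal_measureReal]
  refine ENNReal.ofReal_le_ofReal (hchernoff.trans ?_)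
  calc exp (-(-δ) * ((1 - δ) * p * #s)) * (p * exp (-δ) + (1 - p)) ^ #s
      ≤ exp (-(-δ) * ((1 - δ) * p * #s)) * exp (-(p * (δ - δ ^ 2 / 2))) ^ #s := by
        gcongr
        · nlinarith [exp_pos (-δ), hp.1, hp.2]
        · exact mul_exp_neg_add_one_sub_le hp.1 hδ
    _ = exp (-(δ ^ 2 * p * #s / 2)) := by
        rw [← exp_nat_mul, ← exp_add]
        ring_nf

lemma exp_neg_sq_mul_le_rpow {T q δ κ : ℝ} (hT : 0 < T) (hq : 0 < q)
    (hκ : 1 + 24 * log T / q ≤ κ) : exp (-(δ ^ 2 * q * κ / 2)) ≤ T ^ (-(12 * δ ^ 2)) := by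
  have hqκ : 24 * log T ≤ q * κ := by
    have := mul_le_mul_of_nonneg_left hκ hq.le
    rw [mul_add, mul_div_cancel₀ _ hq.ne'] at this
    linarith
  rw [rpow_def_of_pos hT, exp_le_exp]
  nlinarith [mul_le_mul_of_nonneg_left hqκ (sq_nonneg δ)]

theorem measure_exists_sum_le_le_rpow {Ω : Type*} [MeasurableSpace Ω] {μ : Measure Ω}
    [IsFiniteMeasure μ] {X : ℕ → Ω → ℝ} (hmeas : ∀ ℓ, Measurable (X ℓ))
    (hindep : iIndepFun X μ) {q : ℝ} (hq : q ∈ Set.Ioc 0 1)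
    (hlaw : ∀ ℓ, μ.map (X ℓ) = bernoulliLaw q) {δ : ℝ} (hδ : 0 ≤ δ) {T : ℕ} (hT : 1 ≤ T) :
    μ {ω | ∃ κ : ℕ, κ ≤ T ∧ 1 + 24 * log T / q ≤ κ ∧ ∑ ℓ ∈ range κ, X ℓ ω ≤ (1 - δ) * q * κ} ≤
      ENNReal.ofReal ((T : ℝ) ^ (1 - 12 * δ ^ 2)) := by
  have hTpos : (0 : ℝ) < T := by exact_mod_cast hT
  set K : Finset ℕ := {κ ∈ Icc 1 T | 1 + 24 * log T / q ≤ κ}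
  have hsub : {ω | ∃ κ : ℕ, κ ≤ T ∧ 1 + 24 * log T / q ≤ κ ∧
      ∑ ℓ ∈ range κ, X ℓ ω ≤ (1 - δ) * q * κ} ⊆
      ⋃ κ ∈ K, {ω | ∑ ℓ ∈ range κ, X ℓ ω ≤ (1 - δ) * q * #(range κ)} := by
    rintro ω ⟨κ, hκT, hκ, hsum⟩
    have hκ1 : (1 : ℝ) ≤ κ := hκ.trans' <| le_add_of_nonneg_right <|
      div_nonneg (mul_nonneg (by norm_num) (log_natCast_nonneg T)) hq.1.le
    simp only [Set.mem_iUnion, card_range]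
    exact ⟨κ, mem_filter.2 ⟨mem_Icc.2 ⟨by exact_mod_cast hκ1, hκT⟩, hκ⟩, hsum⟩
  calc μ _ ≤ ∑ κ ∈ K, μ {ω | ∑ ℓ ∈ range κ, X ℓ ω ≤ (1 - δ) * q * #(range κ)} :=
        (measure_mono hsub).trans (measure_biUnion_finset_le _ _)
    _ ≤ ∑ _κ ∈ Icc 1 T, ENNReal.ofReal ((T : ℝ) ^ (-(12 * δ ^ 2))) := by
        refine (sum_le_sum fun κ hκ ↦ ?_).trans (sum_le_sum_of_subset (filter_subset _ _))
        refine (measure_sum_le_le_of_map_eq_bernoulliLaw hmeas hindep ⟨hq.1.le, hq.2⟩ hlaw hδ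
          (range κ)).trans (ENNReal.ofReal_le_ofReal ?_)
        rw [card_range]
        exact exp_neg_sq_mul_le_rpow hTpos hq.1 (mem_filter.1 hκ).2
    _ = ENNReal.ofReal ((T : ℝ) ^ (1 - 12 * δ ^ 2)) := by
        rw [sum_const, Nat.card_Icc, Nat.add_sub_cancel, nsmul_eq_mul, ← ENNReal.ofReal_natCast,
          ← ENNReal.ofReal_mul (Nat.cast_nonneg T), sub_eq_add_neg, rpow_add hTpos, rpow_one]

lemma card_le_sum_one_div {ι : Type*} [Fintype ι] {q : ι → ℝ} (hq : ∀ i, q i ∈ Set.Ioc 0 1) :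
    (Fintype.card ι : ℝ) ≤ ∑ i, 1 / q i := by
  simpa using sum_le_sum fun i (_ : i ∈ univ) ↦ one_le_one_div (hq i).1 (hq i).2

/-- Probability of the "missingness" failure event: for independent arrays of
Bernoulli(q_a) indicators, the probability that some arm `a` and some pull
count `κ` with `1 + 24 ln T / q_a ≤ κ ≤ T` satisfy
`Σ_{ℓ=1}^κ C_{a,ℓ} ≤ (1−δ) q_a κ` is at most `(2/δ²) T^{1−12δ²} Σ_a (1/q_a)`. -/
theorem stmt_8 {Ω : Type*} [MeasurableSpace Ω] (μ : Measure Ω) [IsProbabilityMeasure μ]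
    (A T : ℕ) (hT : 1 ≤ T) (q : Fin A → ℝ) (hq : ∀ a, q a ∈ Set.Ioc (0 : ℝ) 1)
    (δ : ℝ) (hδ : δ ∈ Set.Ioo (0 : ℝ) 1)
    (C : Fin A × ℕ → Ω → ℝ) (hmeas : ∀ i, Measurable (C i))
    (hindep : iIndepFun C μ)
    (hdist : ∀ a ℓ, μ.map (C (a, ℓ)) =
      ENNReal.ofReal (q a) • Measure.dirac (1 : ℝ) + ENNReal.ofReal (1 - q a) • Measure.dirac 0) :
    μ {ω | ∃ a : Fin A, ∃ κ : ℕ, κ ≤ T ∧ (1 + 24 * Real.log T / q a ≤ (κ : ℝ)) ∧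
        ∑ ℓ ∈ Finset.range κ, C (a, ℓ) ω ≤ (1 - δ) * q a * κ} ≤
      ENNReal.ofReal ((2 / δ ^ 2) * (T : ℝ) ^ ((1 : ℝ) - 12 * δ ^ 2) * ∑ a, 1 / q a) := by
  obtain ⟨hδ0, hδ1⟩ := hδ
  have harm (a : Fin A) := measure_exists_sum_le_le_rpow (fun ℓ ↦ hmeas (a, ℓ))
    (hindep.precomp (Prod.mk_right_injective a)) (hq a) (hdist a) hδ0.le hT
  have hA : (A : ℝ) ≤ ∑ a, 1 / q a := by simpa using card_le_sum_one_div hq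
  have hδ2 : 1 ≤ 2 / δ ^ 2 := by rw [le_div_iff₀ (by positivity)]; nlinarith
  calc μ _ ≤ ∑ a, μ {ω | ∃ κ : ℕ, κ ≤ T ∧ 1 + 24 * log T / q a ≤ κ ∧
        ∑ ℓ ∈ range κ, C (a, ℓ) ω ≤ (1 - δ) * q a * κ} := by
        rw [Set.ofPred_exists]
        exact measure_iUnion_fintype_le _ _
    _ ≤ ∑ _a : Fin A, ENNReal.ofReal ((T : ℝ) ^ (1 - 12 * δ ^ 2)) := sum_le_sum fun a _ ↦ harm a
    _ = ENNReal.ofReal (A * (T : ℝ) ^ (1 - 12 * δ ^ 2)) := by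
        rw [sum_const, card_univ, Fintype.card_fin, nsmul_eq_mul, ← ENNReal.ofReal_natCast,
          ← ENNReal.ofReal_mul A.cast_nonneg]
    _ ≤ _ := by
        refine ENNReal.ofReal_le_ofReal ?_
        have hS : 0 ≤ ∑ a, 1 / q a := hA.trans' A.cast_nonneg
        rw [mul_right_comm]
        gcongr
        exact hA.trans (le_mul_of_one_le_left hS hδ2)
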